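/- Let X₁,…,Xₙ be independent random variables taking values in a set 𝒳 and let f : 𝒳ⁿ → ℝ be measurable with f(X) square-integrable. Then E[(f(X) − f(X^{(1)})) (f(X^{[n]∖{1}}) − f(X^{[n]}))] = 2 E[g(X₁)²] − 2 (E f(X))², where g(X₁) = E[f(X) | X₁]; in particular this quantity is nonnegative. -/

import Mathlib

/-!
Split `X` into its first coordinate `Y = X₁` and the remaining ones `Z`, and put
`G y = E f(y, Z)`, so that `g(X₁) = G(Y)`. The four vectors in the integrand are `(Y, Z)`,
`(Y', Z)`, `(Y, Z')` and `(Y', Z')` with `Y, Y', Z, Z'` independent. Integrating out `Z` and `Z'`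
first (Fubini), the integrand factors into `(G Y - G Y')²`, whose expectation is
`2 E[G(Y)²] - 2 (E G(Y))² = 2 Var g(X₁) ≥ 0`.
-/

open MeasureTheory ProbabilityTheory

open Classical in
/-- The random vector obtained from `X` by replacing the coordinates indexed by `A`
by the corresponding coordinates of the independent copy `X'`. -/
noncomputable def resample {Ω 𝒳 : Type*} {n : ℕ} (X X' : Fin n → Ω → 𝒳)
    (A : Set (Fin n)) (ω : Ω) : Fin n → 𝒳 :=
  fun i => if i ∈ A then X' i ω else X i ω

open scoped ENNReal

section

variable {α β : Type*} [MeasurableSpace α] [MeasurableSpace β]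

lemma measurePreserving_prodProdProdComm {γ δ : Type*} [MeasurableSpace γ] [MeasurableSpace δ]
    (μa : Measure α) (μb : Measure β) (μc : Measure γ) (μd : Measure δ)
    [SFinite μa] [SFinite μb] [SFinite μc] [SFinite μd] :
    MeasurePreserving (fun w : (α × β) × (γ × δ) => ((w.1.1, w.2.1), (w.1.2, w.2.2)))
      ((μa.prod μb).prod (μc.prod μd)) ((μa.prod μc).prod (μb.prod μd)) := by
  have h₁ := measurePreserving_prodAssoc μa μb (μc.prod μd)
  have h₂ := (MeasurePreserving.id μa).prod
    ((measurePreserving_prodAssoc μb μc μd).symm MeasurableEquiv.prodAssoc)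
  have h₃ := (MeasurePreserving.id μa).prod
    ((Measure.measurePreserving_swap (μ := μb) (ν := μc)).prod (MeasurePreserving.id μd))
  have h₄ := (MeasurePreserving.id μa).prod (measurePreserving_prodAssoc μc μb μd)
  have h₅ := (measurePreserving_prodAssoc μa μc (μb.prod μd)).symm MeasurableEquiv.prodAssoc
  exact h₅.comp (h₄.comp (h₃.comp (h₂.comp h₁)))

variable {μ : Measure α} {ν : Measure β} [IsProbabilityMeasure ν]

lemma map_fst_eq_of_map_prodMk_eq_prod {Ω : Type*} [MeasurableSpace Ω] {P : Measure Ω}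
    {Y : Ω → α} {Z : Ω → β} (hZ : Measurable Z)
    (hlaw : P.map (fun ω => (Y ω, Z ω)) = μ.prod ν) : P.map Y = μ := by
  rw [← Measure.fst_map_prodMk hZ, hlaw, Measure.fst_prod]

theorem condExp_comap_ae_eq_integral_of_map_eq_prod {Ω : Type*} [MeasurableSpace Ω]
    {P : Measure Ω} [IsFiniteMeasure P] [SFinite μ] {Y : Ω → α} {Z : Ω → β}
    (hY : Measurable Y) (hZ : Measurable Z) (hlaw : P.map (fun ω => (Y ω, Z ω)) = μ.prod ν)
    {F : α × β → ℝ} (hF : Integrable F (μ.prod ν)) :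
    P[fun ω => F (Y ω, Z ω) | MeasurableSpace.comap Y inferInstance]
      =ᵐ[P] fun ω => ∫ y, F (Y ω, y) ∂ν := by
  have hlawY := map_fst_eq_of_map_prodMk_eq_prod hZ hlaw
  have hG : AEStronglyMeasurable (fun a => ∫ y, F (a, y) ∂ν) (P.map Y) :=
    hlawY ▸ hF.1.integral_prod_right'
  have hYZ : AEMeasurable (fun ω => (Y ω, Z ω)) P := (hY.prodMk hZ).aemeasurable
  refine (ae_eq_condExp_of_forall_setIntegral_eq hY.comap_le ?_ (fun s _ _ => ?_) ?_ ?_).symm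
  · exact (integrable_map_measure (hlaw ▸ hF.1) hYZ).mp (hlaw ▸ hF)
  · exact ((integrable_map_measure hG hY.aemeasurable).mp
      (hlawY ▸ hF.integral_prod_left)).integrableOn
  · rintro s ⟨t, ht, rfl⟩ -
    calc ∫ ω in Y ⁻¹' t, ∫ y, F (Y ω, y) ∂ν ∂P = ∫ a in t, ∫ y, F (a, y) ∂ν ∂μ := by
          rw [← setIntegral_map ht hG hY.aemeasurable, hlawY]
      _ = ∫ p in t ×ˢ Set.univ, F p ∂(μ.prod ν) := by
          rw [setIntegral_prod _ hF.integrableOn, Measure.restrict_univ]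
      _ = ∫ ω in Y ⁻¹' t, F (Y ω, Z ω) ∂P := by
          rw [← hlaw, setIntegral_map (ht.prod .univ) (hlaw ▸ hF.1) hYZ, Set.mk_preimage_prod,
            Set.preimage_univ, Set.inter_univ]
  · exact hG.comp_ae_measurable' hY.aemeasurable

theorem memLp_integral_prod_right [IsFiniteMeasure μ] {p : ℝ≥0∞} (hp : 1 ≤ p)
    {F : α × β → ℝ} (hF : MemLp F p (μ.prod ν)) :
    MemLp (fun a => ∫ y, F (a, y) ∂ν) p μ := by
  have hCE := condExp_comap_ae_eq_integral_of_map_eq_prod (P := μ.prod ν) measurable_fst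
    measurable_snd (by simp) (hF.integrable hp)
  simp only [Prod.mk.eta] at hCE
  have hG : AEStronglyMeasurable (fun a => ∫ y, F (a, y) ∂ν) μ := hF.1.integral_prod_right'
  rw [← (measurePreserving_fst (μ := μ) (ν := ν)).map_eq] at hG ⊢
  exact (memLp_map_measure_iff hG measurable_fst.aemeasurable).mpr ((hF.condExp hp).ae_eq hCE)

lemma integral_sub_sq_prod_self [IsProbabilityMeasure μ] {g : α → ℝ} (hg : MemLp g 2 μ) :
    ∫ p, (g p.1 - g p.2) ^ 2 ∂(μ.prod μ) = 2 * ∫ a, g a ^ 2 ∂μ - 2 * (∫ a, g a ∂μ) ^ 2 := by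
  have hg₁ : MemLp (fun p : α × α => g p.1) 2 (μ.prod μ) :=
    hg.comp_measurePreserving measurePreserving_fst
  have hg₂ : MemLp (fun p : α × α => g p.2) 2 (μ.prod μ) :=
    hg.comp_measurePreserving measurePreserving_snd
  have hsq : Integrable (fun p : α × α => g p.1 ^ 2 + g p.2 ^ 2) (μ.prod μ) :=
    hg₁.integrable_sq.add hg₂.integrable_sq
  have hmul : Integrable (fun p : α × α => 2 * (g p.1 * g p.2)) (μ.prod μ) :=
    (hg₁.integrable_mul hg₂).const_mul 2
  calc ∫ p, (g p.1 - g p.2) ^ 2 ∂(μ.prod μ)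
      = ∫ p, (g p.1 ^ 2 + g p.2 ^ 2 - 2 * (g p.1 * g p.2)) ∂(μ.prod μ) := by
        congr with p; ring
    _ = ∫ p, g p.1 ^ 2 ∂(μ.prod μ) + ∫ p, g p.2 ^ 2 ∂(μ.prod μ)
          - 2 * ∫ p, g p.1 * g p.2 ∂(μ.prod μ) := by
        rw [integral_sub hsq hmul, integral_add hg₁.integrable_sq hg₂.integrable_sq,
          integral_const_mul]
    _ = 2 * ∫ a, g a ^ 2 ∂μ - 2 * (∫ a, g a ∂μ) ^ 2 := by
        rw [integral_fun_fst (fun a => g a ^ 2), integral_fun_snd (fun a => g a ^ 2),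
          integral_prod_mul g g]
        simp only [probReal_univ, one_smul]
        ring

lemma ae_integral_sub_mul_sub_prod_eq_sq [SFinite μ] {F : α × β → ℝ}
    (hF : Integrable F (μ.prod ν)) :
    ∀ᵐ p ∂(μ.prod μ),
      ∫ q, (F (p.1, q.1) - F (p.2, q.1)) * (F (p.1, q.2) - F (p.2, q.2)) ∂(ν.prod ν)
        = (∫ y, F (p.1, y) ∂ν - ∫ y, F (p.2, y) ∂ν) ^ 2 := by
  have hF' := hF.prod_right_ae
  filter_upwards [Measure.quasiMeasurePreserving_fst.ae hF',
    Measure.quasiMeasurePreserving_snd.ae hF'] with p h₁ h₂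
  rw [integral_prod_mul (fun y => F (p.1, y) - F (p.2, y)) (fun y => F (p.1, y) - F (p.2, y)),
    integral_sub h₁ h₂, sq]

lemma integrable_sub_mul_sub_prod [IsProbabilityMeasure μ] {F : α × β → ℝ}
    (hF : MemLp F 2 (μ.prod ν)) :
    Integrable (fun w : (α × α) × (β × β) =>
      (F (w.1.1, w.2.1) - F (w.1.2, w.2.1)) * (F (w.1.1, w.2.2) - F (w.1.2, w.2.2)))
      ((μ.prod μ).prod (ν.prod ν)) := by
  have hF' {f : α × α → α} {g : β × β → β} (hf : MeasurePreserving f (μ.prod μ) μ)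
      (hg : MeasurePreserving g (ν.prod ν) ν) :
      MemLp (fun w : (α × α) × (β × β) => F (f w.1, g w.2)) 2 ((μ.prod μ).prod (ν.prod ν)) :=
    hF.comp_measurePreserving (hf.prod hg)
  exact ((hF' measurePreserving_fst measurePreserving_fst).sub
    (hF' measurePreserving_snd measurePreserving_fst)).integrable_mul
    ((hF' measurePreserving_fst measurePreserving_snd).sub
      (hF' measurePreserving_snd measurePreserving_snd))

theorem integral_sub_mul_sub_prod [IsProbabilityMeasure μ] {F : α × β → ℝ}
    (hF : MemLp F 2 (μ.prod ν)) :
    ∫ w, (F (w.1.1, w.2.1) - F (w.1.2, w.2.1)) * (F (w.1.1, w.2.2) - F (w.1.2, w.2.2))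
        ∂((μ.prod μ).prod (ν.prod ν))
      = 2 * ∫ a, (∫ y, F (a, y) ∂ν) ^ 2 ∂μ - 2 * (∫ a, ∫ y, F (a, y) ∂ν ∂μ) ^ 2 := by
  rw [integral_prod _ (integrable_sub_mul_sub_prod hF),
    integral_congr_ae (ae_integral_sub_mul_sub_prod_eq_sq (hF.integrable one_le_two))]
  exact integral_sub_sq_prod_self (memLp_integral_prod_right one_le_two hF)

theorem integral_sub_mul_sub_eq_of_map_eq_prod [IsProbabilityMeasure μ] {Ω : Type*}
    [MeasurableSpace Ω] {P : Measure Ω} [IsProbabilityMeasure P]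
    {Y Y' : Ω → α} {Z Z' : Ω → β} (hY : Measurable Y) (hY' : Measurable Y')
    (hZ : Measurable Z) (hZ' : Measurable Z')
    (hlaw : P.map (fun ω => ((Y ω, Z ω), (Y' ω, Z' ω))) = (μ.prod ν).prod (μ.prod ν))
    {F : α × β → ℝ} (hFm : AEStronglyMeasurable F (μ.prod ν))
    (hF : MemLp (fun ω => F (Y ω, Z ω)) 2 P) :
    ∫ ω, (F (Y ω, Z ω) - F (Y' ω, Z ω)) * (F (Y ω, Z' ω) - F (Y' ω, Z' ω)) ∂P
      = 2 * ∫ ω, (P[fun ω => F (Y ω, Z ω) | MeasurableSpace.comap Y inferInstance] ω) ^ 2 ∂P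
        - 2 * (∫ ω, F (Y ω, Z ω) ∂P) ^ 2 := by
  have hlawYZ : P.map (fun ω => (Y ω, Z ω)) = μ.prod ν :=
    map_fst_eq_of_map_prodMk_eq_prod (hY'.prodMk hZ') hlaw
  have hlawY : P.map Y = μ := map_fst_eq_of_map_prodMk_eq_prod hZ hlawYZ
  have hF₂ : MemLp F 2 (μ.prod ν) := by
    rw [← hlawYZ] at hFm ⊢
    exact (memLp_map_measure_iff hFm (hY.prodMk hZ).aemeasurable).mpr hF
  have hG : AEStronglyMeasurable (fun a => ∫ y, F (a, y) ∂ν) μ := hFm.integral_prod_right'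
  have hmp : MeasurePreserving (fun ω => ((Y ω, Y' ω), (Z ω, Z' ω))) P
      ((μ.prod μ).prod (ν.prod ν)) :=
    (measurePreserving_prodProdProdComm μ ν μ ν).comp
      ⟨(hY.prodMk hZ).prodMk (hY'.prodMk hZ'), hlaw⟩
  have hcross : ∫ ω, (F (Y ω, Z ω) - F (Y' ω, Z ω)) * (F (Y ω, Z' ω) - F (Y' ω, Z' ω)) ∂P
      = ∫ w, (F (w.1.1, w.2.1) - F (w.1.2, w.2.1)) * (F (w.1.1, w.2.2) - F (w.1.2, w.2.2))
          ∂((μ.prod μ).prod (ν.prod ν)) := by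
    rw [← hmp.map_eq, integral_map hmp.measurable.aemeasurable
      (hmp.map_eq ▸ (integrable_sub_mul_sub_prod hF₂).1)]
  have hcondExp :
      ∫ ω, (P[fun ω => F (Y ω, Z ω) | MeasurableSpace.comap Y inferInstance] ω) ^ 2 ∂P
        = ∫ a, (∫ y, F (a, y) ∂ν) ^ 2 ∂μ := by
    have hCE := condExp_comap_ae_eq_integral_of_map_eq_prod hY hZ hlawYZ
      (hF₂.integrable one_le_two)
    rw [integral_congr_ae (hCE.mono fun ω hω => by rw [hω]), ← hlawY,
      integral_map hY.aemeasurable (hlawY ▸ hG.pow 2)]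
  have hmean : ∫ ω, F (Y ω, Z ω) ∂P = ∫ a, ∫ y, F (a, y) ∂ν ∂μ := by
    rw [← integral_prod _ (hF₂.integrable one_le_two), ← hlawYZ,
      integral_map (hY.prodMk hZ).aemeasurable (hlawYZ ▸ hFm)]
  rw [hcross, integral_sub_mul_sub_prod hF₂, hcondExp, hmean]

end

lemma sq_integral_le_integral_sq_condExp {Ω : Type*} {m m₀ : MeasurableSpace Ω}
    {P : Measure Ω} [IsProbabilityMeasure P] (hm : m ≤ m₀) {f : Ω → ℝ} (hf : MemLp f 2 P) :
    (∫ ω, f ω ∂P) ^ 2 ≤ ∫ ω, (P[f | m] ω) ^ 2 ∂P := by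
  have h := variance_nonneg (P[f | m]) P
  rw [variance_eq_sub (hf.condExp one_le_two), integral_condExp hm] at h
  simpa using h

lemma map_prod_pi_eq_of_iIndepFun_sumElim {ι Ω 𝒳 : Type*} [Fintype ι] [MeasurableSpace Ω]
    [MeasurableSpace 𝒳] {P : Measure Ω} {X X' : ι → Ω → 𝒳}
    (hX : ∀ i, Measurable (X i)) (hX' : ∀ i, Measurable (X' i))
    (hindep : iIndepFun (Sum.elim X X') P) (hid : ∀ i, IdentDistrib (X' i) (X i) P P) :
    P.map (fun ω => (fun i => X i ω, fun i => X' i ω))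
      = (Measure.pi fun i => P.map (X i)).prod (Measure.pi fun i => P.map (X i)) := by
  have := hindep.isProbabilityMeasure
  have hmeas : ∀ k, Measurable (Sum.elim X X' k) := Sum.rec hX hX'
  have hmp := measurePreserving_sumPiEquivProdPi fun k => P.map (Sum.elim X X' k)
  calc P.map (fun ω => (fun i => X i ω, fun i => X' i ω))
      = (P.map fun ω k => Sum.elim X X' k ω).map (MeasurableEquiv.sumPiEquivProdPi _) := by
        rw [Measure.map_map hmp.measurable (measurable_pi_lambda _ hmeas)]
        rfl
    _ = (Measure.pi fun i => P.map (X i)).prod (Measure.pi fun i => P.map (X i)) := by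
        rw [hindep.map_fun_eq_pi_map fun k => (hmeas k).aemeasurable, hmp.map_eq]
        simp only [Sum.elim_inl, Sum.elim_inr, (hid _).map_eq]

/-- `E[(f(X) − f(X^{(1)})) (f(X^{[n]∖{1}}) − f(X^{[n]}))] = 2 E[g(X₁)²] − 2 (E f(X))²`,
where `g(X₁) = E[f(X) | X₁]`; in particular this quantity is nonnegative.
The first coordinate (1-based index 1) is `⟨0, hn⟩ : Fin n`. -/
theorem last_term_nonneg
    {Ω : Type*} [MeasurableSpace Ω] (P : Measure Ω) [IsProbabilityMeasure P]
    {𝒳 : Type*} [MeasurableSpace 𝒳] (n : ℕ) (hn : 0 < n)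
    (X X' : Fin n → Ω → 𝒳)
    (hmeas : ∀ i, Measurable (X i)) (hmeas' : ∀ i, Measurable (X' i))
    (hindep : iIndepFun (Sum.elim X X' : Fin n ⊕ Fin n → Ω → 𝒳) P)
    (hid : ∀ i, IdentDistrib (X' i) (X i) P P)
    (f : (Fin n → 𝒳) → ℝ) (hf : Measurable f)
    (hL2 : MemLp (fun ω => f (fun i => X i ω)) 2 P) :
    (∫ ω, (f (fun i => X i ω) - f (resample X X' {⟨0, hn⟩} ω)) *
        (f (resample X X' {l | l ≠ ⟨0, hn⟩} ω) - f (resample X X' Set.univ ω)) ∂P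
      = 2 * ∫ ω,
          ((P[fun ω' => f (fun i => X i ω') |
              MeasurableSpace.comap (X ⟨0, hn⟩) inferInstance]) ω) ^ 2 ∂P
        - 2 * (∫ ω, f (fun i => X i ω) ∂P) ^ 2) ∧
    0 ≤ ∫ ω, (f (fun i => X i ω) - f (resample X X' {⟨0, hn⟩} ω)) *
        (f (resample X X' {l | l ≠ ⟨0, hn⟩} ω) - f (resample X X' Set.univ ω)) ∂P := by
  obtain ⟨m, rfl⟩ := Nat.exists_eq_add_one_of_ne_zero hn.ne'
  rw [show (⟨0, hn⟩ : Fin (m + 1)) = 0 from rfl]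
  -- `e v` unfolds to `(v 0, fun j => v j.succ)`; `hX` and `hlaw` use this definitionally.
  set e := MeasurableEquiv.piFinSuccAbove (fun _ : Fin (m + 1) => 𝒳) 0
  have hX : ∀ ω, e.symm (X 0 ω, fun j => X j.succ ω) = fun i => X i ω :=
    fun ω => e.symm_apply_apply (fun i => X i ω)
  have hres₁ : ∀ ω, e.symm (X' 0 ω, fun j => X j.succ ω) = resample X X' {0} ω :=
    fun ω => e.symm_apply_eq.mpr (by ext <;> simp [e, resample, Fin.tail, Fin.succ_ne_zero])
  have hres_rest : ∀ ω, e.symm (X 0 ω, fun j => X' j.succ ω) = resample X X' {l | l ≠ 0} ω :=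
    fun ω => e.symm_apply_eq.mpr (by ext <;> simp [e, resample, Fin.tail, Fin.succ_ne_zero])
  have hres_univ : ∀ ω, e.symm (X' 0 ω, fun j => X' j.succ ω) = resample X X' Set.univ ω :=
    fun ω => e.symm_apply_eq.mpr (by ext <;> simp [e, resample, Fin.tail])
  have hlaw : P.map (fun ω => ((X 0 ω, fun j => X j.succ ω), (X' 0 ω, fun j => X' j.succ ω)))
      = ((P.map (X 0)).prod (Measure.pi fun j => P.map (X (Fin.succAbove 0 j)))).prod
        ((P.map (X 0)).prod (Measure.pi fun j => P.map (X (Fin.succAbove 0 j)))) := by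
    have he := measurePreserving_piFinSuccAbove (fun i => P.map (X i)) 0
    rw [← (he.prod he).map_eq, ← map_prod_pi_eq_of_iIndepFun_sumElim hmeas hmeas' hindep hid,
      Measure.map_map (he.prod he).measurable (by fun_prop)]
    rfl
  have : ∀ i, IsProbabilityMeasure (P.map (X i)) :=
    fun i => Measure.isProbabilityMeasure_map (hmeas i).aemeasurable
  have key := integral_sub_mul_sub_eq_of_map_eq_prod (hmeas 0) (hmeas' 0) (by fun_prop)
    (by fun_prop) hlaw (hf.comp e.symm.measurable).aestronglyMeasurable
    (F := f ∘ e.symm) (by simpa only [Function.comp_apply, hX] using hL2)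
  simp only [Function.comp_apply, hX, hres₁, hres_rest, hres_univ] at key
  refine ⟨key, ?_⟩
  rw [key]
  linarith [sq_integral_le_integral_sq_condExp (hmeas 0).comap_le hL2]
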